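/- If B₁ and B₂ are symmetric real n×n matrices with trace zero, then ‖[B₁,B₁]‖² + ‖[B₁,B₂]‖² + ‖[B₂,B₁]‖² + ‖[B₂,B₂]‖² ≤ (‖B₁‖² + ‖B₂‖²)², i.e., 2‖[B₁,B₂]‖² ≤ (‖B₁‖² + ‖B₂‖²)². -/

import Mathlib

open Matrix

noncomputable def frobSq {n : ℕ} (A : Matrix (Fin n) (Fin n) ℝ) : ℝ :=
  (Aᵀ * A).trace

def mcomm {n : ℕ} (A B : Matrix (Fin n) (Fin n) ℝ) : Matrix (Fin n) (Fin n) ℝ :=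
  A * B - B * A

/-!
Diagonalize the symmetric matrix `B₁` by an orthogonal matrix. Conjugation preserves both the
Frobenius norm and commutators, and for `D = diagonal d` the `(i, j)` entry of `[D, B]` is
`(dᵢ - dⱼ) Bᵢⱼ` with `(dᵢ - dⱼ)² ≤ 2 ‖D‖²`. Hence `‖[B₁, B₂]‖² ≤ 2 ‖B₁‖² ‖B₂‖²`, and
`4ab ≤ (a + b)²` finishes.
-/

lemma sq_sub_le_two_mul_sum_sq {ι : Type*} [Fintype ι] (d : ι → ℝ) (i j : ι) :
    (d i - d j) ^ 2 ≤ 2 * ∑ k, d k ^ 2 := by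
  classical
  rcases eq_or_ne i j with rfl | hij
  · rw [sub_self, zero_pow two_ne_zero]
    positivity
  · have hpair : d i ^ 2 + d j ^ 2 ≤ ∑ k, d k ^ 2 :=
      calc d i ^ 2 + d j ^ 2 = ∑ k ∈ {i, j}, d k ^ 2 :=
            (Finset.sum_pair (f := (d · ^ 2)) hij).symm
        _ ≤ ∑ k, d k ^ 2 :=
          Finset.sum_le_sum_of_subset_of_nonneg (Finset.subset_univ _) fun k _ _ ↦ sq_nonneg _
    nlinarith [sq_nonneg (d i + d j)]

section Frobenius

variable {n : ℕ}

lemma frobSq_eq_sum (A : Matrix (Fin n) (Fin n) ℝ) : frobSq A = ∑ i, ∑ j, A i j ^ 2 := by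
  simp only [frobSq, trace, diag, mul_apply, transpose_apply, sq]
  exact Finset.sum_comm

lemma frobSq_nonneg (A : Matrix (Fin n) (Fin n) ℝ) : 0 ≤ frobSq A := by
  rw [frobSq_eq_sum]
  positivity

@[simp]
lemma frobSq_zero : frobSq (0 : Matrix (Fin n) (Fin n) ℝ) = 0 := by
  simp [frobSq]

@[simp]
lemma frobSq_neg (A : Matrix (Fin n) (Fin n) ℝ) : frobSq (-A) = frobSq A := by
  simp [frobSq]

lemma frobSq_diagonal (d : Fin n → ℝ) : frobSq (diagonal d) = ∑ i, d i ^ 2 := by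
  simp [frobSq, sq]

lemma frobSq_conjStarAlgAut (U : unitary (Matrix (Fin n) (Fin n) ℝ))
    (A : Matrix (Fin n) (Fin n) ℝ) : frobSq (Unitary.conjStarAlgAut ℝ _ U A) = frobSq A := by
  have hstar : ∀ M : Matrix (Fin n) (Fin n) ℝ, Mᵀ = star M := fun M ↦
    (conjTranspose_eq_transpose_of_trivial M).symm
  rw [frobSq, frobSq, Unitary.conjStarAlgAut_apply, hstar, hstar]
  set u : Matrix (Fin n) (Fin n) ℝ := ↑U
  have hu : star u * u = 1 := Unitary.coe_star_mul_self U
  calc (star (u * A * star u) * (u * A * star u)).trace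
      = (u * (star A * A) * star u).trace := by
        simp only [star_mul, star_star, mul_assoc, ← mul_assoc (star u) u, hu, one_mul]
    _ = (star u * u * (star A * A)).trace := trace_mul_cycle _ _ _
    _ = (star A * A).trace := by rw [hu, one_mul]

@[simp]
lemma mcomm_self (A : Matrix (Fin n) (Fin n) ℝ) : mcomm A A = 0 :=
  sub_self _

lemma mcomm_swap (A B : Matrix (Fin n) (Fin n) ℝ) : mcomm B A = -mcomm A B :=
  (neg_sub _ _).symm

lemma map_mcomm (U : unitary (Matrix (Fin n) (Fin n) ℝ)) (A B : Matrix (Fin n) (Fin n) ℝ) :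
    Unitary.conjStarAlgAut ℝ _ U (mcomm A B) =
      mcomm (Unitary.conjStarAlgAut ℝ _ U A) (Unitary.conjStarAlgAut ℝ _ U B) := by
  simp only [mcomm, map_sub, map_mul]

lemma mcomm_diagonal_apply (d : Fin n → ℝ) (B : Matrix (Fin n) (Fin n) ℝ) (i j : Fin n) :
    mcomm (diagonal d) B i j = (d i - d j) * B i j := by
  simp only [mcomm, Matrix.sub_apply, diagonal_mul, mul_diagonal]
  ring

lemma frobSq_mcomm_diagonal_le (d : Fin n → ℝ) (B : Matrix (Fin n) (Fin n) ℝ) :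
    frobSq (mcomm (diagonal d) B) ≤ 2 * frobSq (diagonal d) * frobSq B := by
  simp only [frobSq_eq_sum (mcomm _ _), frobSq_eq_sum B, frobSq_diagonal, mcomm_diagonal_apply,
    mul_pow]
  rw [Finset.mul_sum]
  gcongr with i
  rw [Finset.mul_sum]
  gcongr with j
  exact sq_sub_le_two_mul_sum_sq d i j

theorem Matrix.IsSymm.frobSq_mcomm_le {A : Matrix (Fin n) (Fin n) ℝ} (hA : A.IsSymm)
    (B : Matrix (Fin n) (Fin n) ℝ) : frobSq (mcomm A B) ≤ 2 * frobSq A * frobSq B := by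
  have hA' : A.IsHermitian := isHermitian_iff_isSymm.mpr hA
  have hdiag : Unitary.conjStarAlgAut ℝ _ (star hA'.eigenvectorUnitary) A =
      diagonal (RCLike.ofReal ∘ hA'.eigenvalues) :=
    hA'.conjStarAlgAut_star_eigenvectorUnitary
  rw [← frobSq_conjStarAlgAut (star hA'.eigenvectorUnitary) (mcomm A B), map_mcomm,
    ← frobSq_conjStarAlgAut (star hA'.eigenvectorUnitary) A,
    ← frobSq_conjStarAlgAut (star hA'.eigenvectorUnitary) B, hdiag]
  exact frobSq_mcomm_diagonal_le _ _

end Frobenius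

theorem ddvv_m2_general {n : ℕ} (B₁ B₂ : Matrix (Fin n) (Fin n) ℝ)
    (h₁ : B₁.IsSymm) :
    frobSq (mcomm B₁ B₁) + frobSq (mcomm B₁ B₂) + frobSq (mcomm B₂ B₁) +
      frobSq (mcomm B₂ B₂) ≤ (frobSq B₁ + frobSq B₂) ^ 2 := by
  rw [mcomm_self, mcomm_self, mcomm_swap B₁ B₂, frobSq_neg, frobSq_zero]
  have hcomm := h₁.frobSq_mcomm_le B₂
  nlinarith [sq_nonneg (frobSq B₁ - frobSq B₂), frobSq_nonneg B₁, frobSq_nonneg B₂]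

/-- DDVV matrix inequality for m = 2. -/
theorem ddvv_m2 {n : ℕ} (B₁ B₂ : Matrix (Fin n) (Fin n) ℝ)
    (h₁ : B₁.IsSymm) (h₂ : B₂.IsSymm) (t₁ : B₁.trace = 0) (t₂ : B₂.trace = 0) :
    frobSq (mcomm B₁ B₁) + frobSq (mcomm B₁ B₂) + frobSq (mcomm B₂ B₁) +
      frobSq (mcomm B₂ B₂) ≤ (frobSq B₁ + frobSq B₂) ^ 2 :=
  ddvv_m2_general B₁ B₂ h₁
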